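/- (Hamming distance enumerator of VT codes.) For n ≥ 1, m := n+1, a ∈ {0,…,n}, and VT_a(n) := { x ∈ {0,1}^n | ∑_{i=1}^n i·x_i ≡ a (mod n+1) }, the Hamming distance enumerator satisfies ∑_{x,y ∈ VT_a(n)} z^{d_H(x,y)} = (1/m²) ∑_{j=0}^{m−1} ∑_{k=0}^{m−1} e(−a(j+k)/m) · ∏_{i=1}^{m−1} ( 1 + e(i(j+k)/m) + e(ij/m) z + e(ik/m) z ), for all complex z. -/
import Mathlib

open Finset

noncomputable def ee (x : ℝ) : ℂ := Complex.exp (2 * Real.pi * Complex.I * x)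

/-- Hamming distance on `Fin n → Fin 2`. -/
def hammingDist' {n : ℕ} (x y : Fin n → Fin 2) : ℕ :=
  (Finset.univ.filter fun i => x i ≠ y i).card

lemma ee_add (x y : ℝ) : ee (x + y) = ee x * ee y := by
  simp [ee, mul_add, Complex.exp_add]

lemma ee_zero : ee 0 = 1 := by simp [ee]

lemma ee_sum {ι : Type*} (s : Finset ι) (f : ι → ℝ) :
    ee (∑ i ∈ s, f i) = ∏ i ∈ s, ee (f i) := by
  classical
  induction s using Finset.induction with
  | empty => simp [ee_zero]
  | @insert a s h ih => rw [Finset.sum_insert h, Finset.prod_insert h, ee_add, ih]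

lemma ee_pow (x : ℝ) (j : ℕ) : ee x ^ j = ee (j * x) := by
  simp [ee, ← Complex.exp_nat_mul]
  ring_nf

lemma ee_int (d : ℤ) : ee d = 1 := by
  simp only [ee]
  rw [show (2 * ↑Real.pi * Complex.I * ((d:ℝ):ℂ) : ℂ) = (d:ℤ) * (2 * ↑Real.pi * Complex.I) by push_cast; ring]
  exact Complex.exp_int_mul_two_pi_mul_I d

lemma char_sum (m : ℕ) (hm : 0 < m) (d : ℤ) :
    ∑ j ∈ range m, ee (j * (d : ℝ) / m) = if (m:ℤ) ∣ d then (m:ℂ) else 0 := by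
  have hm' : (m:ℝ) ≠ 0 := Nat.cast_ne_zero.2 hm.ne'
  have hterm : ∀ j ∈ range m, ee (j * (d : ℝ) / m) = ee ((d:ℝ)/m) ^ j := by
    intro j _
    rw [ee_pow]; ring_nf
  rw [Finset.sum_congr rfl hterm]
  by_cases h : (m:ℤ) ∣ d
  · obtain ⟨c, rfl⟩ := h
    have : ee ((((m:ℤ)*c : ℤ):ℝ)/m) = 1 := by
      rw [show ((((m:ℤ)*c : ℤ):ℝ)/m) = ((c:ℤ):ℝ) by push_cast; field_simp]
      exact ee_int c
    rw [if_pos (dvd_mul_right _ _)]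
    push_cast at this ⊢
    simp [this]
  · rw [if_neg h]
    have hζ : ee ((d:ℝ)/m) ≠ 1 := by
      intro hc
      apply h
      simp only [ee, Complex.exp_eq_one_iff] at hc
      obtain ⟨k, hk⟩ := hc
      have hπ : (2 * (Real.pi:ℂ) * Complex.I) ≠ 0 := by
        simp [Real.pi_ne_zero, Complex.I_ne_zero]
      rw [mul_comm (k:ℂ)] at hk
      have : (((d:ℝ)/m : ℝ):ℂ) = (k:ℂ) := mul_left_cancel₀ hπ hk
      have h2 : ((d:ℝ)/m : ℝ) = (k:ℝ) := by exact_mod_cast this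
      have : (d:ℝ) = (k:ℝ) * m := by field_simp at h2; linarith [h2]
      exact Dvd.intro_left k (by exact_mod_cast this.symm)
    rw [geom_sum_eq hζ]
    have : ee ((d:ℝ)/m) ^ m = 1 := by
      rw [ee_pow, show (m:ℝ) * ((d:ℝ)/m) = ((d:ℤ):ℝ) by field_simp]
      exact ee_int d
    simp [this]

theorem vt_distance_enumerator (n : ℕ) (hn : 1 ≤ n) (m : ℕ) (hm : m = n + 1)
    (a : ℕ) (ha : a ≤ n)
    (VT : Finset (Fin n → Fin 2))
    (hVT : VT = Finset.univ.filter fun x => (∑ i : Fin n, (i.val + 1) * (x i : ℕ)) ≡ a [MOD (n + 1)])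
    (z : ℂ) :
    ∑ x ∈ VT, ∑ y ∈ VT, z ^ hammingDist' x y
      = (1 / (m : ℂ) ^ 2) * ∑ j ∈ Finset.range m, ∑ k ∈ Finset.range m,
          ee (-( (a : ℝ) * ((j : ℝ) + k)) / m) *
            ∏ i ∈ Finset.Icc 1 (m - 1),
              (1 + ee ((i : ℝ) * ((j : ℝ) + k) / m) + ee ((i : ℝ) * j / m) * z
                + ee ((i : ℝ) * k / m) * z) := by
  subst hm hVT
  simp only [Nat.add_sub_cancel]
  set N := n + 1 with hN
  set S : (Fin n → Fin 2) → ℕ := fun x => ∑ i : Fin n, (i.val + 1) * (x i : ℕ) with hS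
  have hNpos : 0 < N := Nat.succ_pos n
  have hNC : (N:ℂ) ≠ 0 := Nat.cast_ne_zero.2 hNpos.ne'
  -- the unnormalized character sum
  set B : (Fin n → Fin 2) → ℂ := fun x => ∑ j ∈ range N, ee (j * ((S x:ℝ) - a) / N) with hB
  -- indicator identity
  have hInd : ∀ x : Fin n → Fin 2,
      (if S x ≡ a [MOD N] then (1:ℂ) else 0) = (1/(N:ℂ)) * B x := by
    intro x
    have h1 : B x = if (N:ℤ) ∣ ((S x : ℤ) - a) then (N:ℂ) else 0 := by
      rw [hB, ← char_sum N hNpos ((S x : ℤ) - a)]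
      exact Finset.sum_congr rfl fun j _ => by push_cast; ring_nf
    rw [h1]
    have h2 : (S x ≡ a [MOD N]) ↔ (N:ℤ) ∣ ((S x:ℤ) - a) := by
      rw [Nat.modEq_iff_dvd]
      exact dvd_sub_comm
    by_cases hmod : S x ≡ a [MOD N]
    · rw [if_pos hmod, if_pos (h2.mp hmod)]
      field_simp
    · rw [if_neg hmod, if_neg (fun hd => hmod (h2.mpr hd))]
      simp
  -- LHS as indicator double sum
  have hL : (∑ x ∈ Finset.univ.filter fun x => S x ≡ a [MOD N],
        ∑ y ∈ Finset.univ.filter fun x => S x ≡ a [MOD N], z ^ hammingDist' x y)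
      = ∑ x : Fin n → Fin 2, ∑ y : Fin n → Fin 2,
          ((1/(N:ℂ)) * B x) * (((1/(N:ℂ)) * B y) * z ^ hammingDist' x y) := by
    have hInd' : ∀ x' : Fin n → Fin 2,
        (1/(N:ℂ)) * B x' = if S x' ≡ a [MOD N] then 1 else 0 := fun x' => (hInd x').symm
    simp_rw [hInd']
    rw [Finset.sum_filter]
    refine Finset.sum_congr rfl fun x _ => ?_
    by_cases hx : S x ≡ a [MOD N] <;> simp [hx, Finset.sum_filter, ite_mul]
  rw [show (Finset.univ.filter fun x => (∑ i : Fin n, (i.val + 1) * (x i : ℕ)) ≡ a [MOD N])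
      = (Finset.univ.filter fun x => S x ≡ a [MOD N]) from rfl, hL]
  -- expand and swap sums
  have hexp : (∑ x : Fin n → Fin 2, ∑ y : Fin n → Fin 2,
        ((1/(N:ℂ)) * B x) * (((1/(N:ℂ)) * B y) * z ^ hammingDist' x y))
      = (1/(N:ℂ)^2) * ∑ j ∈ range N, ∑ k ∈ range N,
          ∑ x : Fin n → Fin 2, ∑ y : Fin n → Fin 2,
            ee (j * ((S x:ℝ) - a) / N) * (ee (k * ((S y:ℝ) - a) / N) * z ^ hammingDist' x y) := by
    have step1 : ∀ x y : Fin n → Fin 2,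
        ((1/(N:ℂ)) * B x) * (((1/(N:ℂ)) * B y) * z ^ hammingDist' x y)
        = ∑ j ∈ range N, ∑ k ∈ range N, (1/(N:ℂ)^2) *
            (ee (j * ((S x:ℝ) - a) / N) * (ee (k * ((S y:ℝ) - a) / N) * z ^ hammingDist' x y)) := by
      intro x y
      calc ((1/(N:ℂ)) * B x) * (((1/(N:ℂ)) * B y) * z ^ hammingDist' x y)
          = (1/(N:ℂ)^2) * ((B x * B y) * z ^ hammingDist' x y) := by ring
        _ = (1/(N:ℂ)^2) * ((∑ j ∈ range N, ∑ k ∈ range N,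
              ee (j * ((S x:ℝ) - a) / N) * ee (k * ((S y:ℝ) - a) / N)) * z ^ hammingDist' x y) := by
            rw [hB, Finset.sum_mul_sum]
        _ = ∑ j ∈ range N, ∑ k ∈ range N, (1/(N:ℂ)^2) *
              (ee (j * ((S x:ℝ) - a) / N) * (ee (k * ((S y:ℝ) - a) / N) * z ^ hammingDist' x y)) := by
            rw [Finset.sum_mul, Finset.mul_sum]
            refine Finset.sum_congr rfl fun j _ => ?_
            rw [Finset.sum_mul, Finset.mul_sum]
            exact Finset.sum_congr rfl fun k _ => by ring
    simp_rw [step1]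
    rw [Finset.sum_congr rfl fun (x : Fin n → Fin 2) _ => Finset.sum_comm]
    rw [Finset.sum_comm]
    rw [Finset.sum_congr rfl fun j _ => Finset.sum_congr rfl fun (x : Fin n → Fin 2) _ => Finset.sum_comm]
    rw [Finset.sum_congr rfl fun j _ => Finset.sum_comm]
    simp_rw [Finset.mul_sum]
  rw [hexp]
  congr 1
  refine Finset.sum_congr rfl fun j _ => Finset.sum_congr rfl fun k _ => ?_
  set F : Fin n → Fin 2 → Fin 2 → ℂ := fun i s t =>
    ee (((i.val:ℝ)+1) * j * ((s:ℕ):ℝ) / N) *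
      (ee (((i.val:ℝ)+1) * k * ((t:ℕ):ℝ) / N) * (if s ≠ t then z else 1)) with hF
  have claim1 : ∀ x y : Fin n → Fin 2,
      ee ((j:ℝ) * (S x:ℝ) / N) * (ee ((k:ℝ) * (S y:ℝ) / N) * z ^ hammingDist' x y)
      = ∏ i : Fin n, F i (x i) (y i) := by
    intro x y
    have hx : (j:ℝ) * (S x:ℝ) / N = ∑ i : Fin n, (((i.val:ℝ)+1) * j * ((x i : ℕ):ℝ) / N) := by
      simp only [hS]; push_cast
      rw [Finset.mul_sum, Finset.sum_div]
      exact Finset.sum_congr rfl fun i _ => by ring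
    have hy : (k:ℝ) * (S y:ℝ) / N = ∑ i : Fin n, (((i.val:ℝ)+1) * k * ((y i : ℕ):ℝ) / N) := by
      simp only [hS]; push_cast
      rw [Finset.mul_sum, Finset.sum_div]
      exact Finset.sum_congr rfl fun i _ => by ring
    have hz : (z : ℂ) ^ hammingDist' x y = ∏ i : Fin n, (if x i ≠ y i then z else 1) := by
      rw [hammingDist', ← Finset.prod_const, Finset.prod_filter]
    rw [hx, hy, hz, ee_sum, ee_sum, ← Finset.prod_mul_distrib, ← Finset.prod_mul_distrib]
  have claim2 : (∑ x : Fin n → Fin 2, ∑ y : Fin n → Fin 2, ∏ i : Fin n, F i (x i) (y i))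
      = ∏ i : Fin n, (∑ s : Fin 2, ∑ t : Fin 2, F i s t) := by
    have h1 : ∀ x : Fin n → Fin 2, (∑ y : Fin n → Fin 2, ∏ i : Fin n, F i (x i) (y i))
        = ∏ i : Fin n, ∑ t : Fin 2, F i (x i) t :=
      fun x => (Fintype.prod_sum fun i t => F i (x i) t).symm
    simp_rw [h1]
    exact (Fintype.prod_sum fun i s => ∑ t : Fin 2, F i s t).symm
  have claim3 : ∀ i : Fin n, (∑ s : Fin 2, ∑ t : Fin 2, F i s t)
      = 1 + ee (((i.val:ℝ)+1) * ((j:ℝ)+k) / N) + ee (((i.val:ℝ)+1) * j / N) * z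
        + ee (((i.val:ℝ)+1) * k / N) * z := by
    intro i
    have e1 : ee (((i.val:ℝ)+1) * j / N) * ee (((i.val:ℝ)+1) * k / N)
        = ee (((i.val:ℝ)+1) * ((j:ℝ)+k) / N) := by
      rw [← ee_add]; congr 1; ring
    rw [Fin.sum_univ_two]
    rw [show (∑ t : Fin 2, F i 0 t) = F i 0 0 + F i 0 1 from Fin.sum_univ_two _]
    rw [show (∑ t : Fin 2, F i 1 t) = F i 1 0 + F i 1 1 from Fin.sum_univ_two _]
    simp only [hF, Fin.val_zero, Fin.val_one, Nat.cast_zero, Nat.cast_one, mul_zero, zero_div,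
      ee_zero, mul_one, one_mul, ne_eq]
    norm_num
    rw [← e1]; ring
  have claim4 : (∏ i : Fin n, (1 + ee (((i.val:ℝ)+1) * ((j:ℝ)+k) / N)
        + ee (((i.val:ℝ)+1) * j / N) * z + ee (((i.val:ℝ)+1) * k / N) * z))
      = ∏ i ∈ Icc 1 n, (1 + ee ((i:ℝ) * ((j:ℝ)+k) / N) + ee ((i:ℝ) * j / N) * z
        + ee ((i:ℝ) * k / N) * z) := by
    rw [show (Icc 1 n) = Ico 1 (n+1) from (Finset.Ico_add_one_right_eq_Icc 1 n).symm,
      Finset.prod_Ico_eq_prod_range]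
    simp only [Nat.add_sub_cancel]
    rw [Fin.prod_univ_eq_prod_range (fun t => (1 + ee (((t:ℝ)+1) * ((j:ℝ)+k) / N)
        + ee (((t:ℝ)+1) * j / N) * z + ee (((t:ℝ)+1) * k / N) * z)) n]
    refine Finset.prod_congr rfl fun i _ => ?_
    have : ((1+i : ℕ):ℝ) = ((i:ℕ):ℝ) + 1 := by push_cast; ring
    rw [this]
  have split : ∀ x y : Fin n → Fin 2,
      ee ((j:ℝ) * ((S x:ℝ) - a) / N) * (ee ((k:ℝ) * ((S y:ℝ) - a) / N) * z ^ hammingDist' x y)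
      = ee (-( (a:ℝ) * ((j:ℝ) + k)) / N) *
          (ee ((j:ℝ) * (S x:ℝ) / N) * (ee ((k:ℝ) * (S y:ℝ) / N) * z ^ hammingDist' x y)) := by
    intro x y
    have h1 : (j:ℝ) * ((S x:ℝ) - a) / N = (-( (a:ℝ) * j) / N) + (j:ℝ) * (S x:ℝ) / N := by ring
    have h2 : (k:ℝ) * ((S y:ℝ) - a) / N = (-( (a:ℝ) * k) / N) + (k:ℝ) * (S y:ℝ) / N := by ring
    have h3 : ee (-( (a:ℝ) * j) / N) * ee (-( (a:ℝ) * k) / N)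
        = ee (-( (a:ℝ) * ((j:ℝ)+k)) / N) := by
      rw [← ee_add]; congr 1; ring
    rw [h1, h2, ee_add, ee_add, ← h3]; ring
  simp_rw [split, claim1, ← Finset.mul_sum]
  congr 1
  rw [claim2, Finset.prod_congr rfl (fun i _ => claim3 i), claim4]
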